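/- There exists an instance with 4 women and 4 men such that: (1) no single woman can obtain a strictly better partner by unilaterally misreporting her preferences to the men-proposing Gale-Shapley mechanism; (2) there exist false preference reports for two women w1, w2 under which both are strictly better-off; and (3) the resulting matching is not stable under the true preferences. -/

import Mathlib

namespace GS

/-- The `k` most-preferred elements of `S` according to the rank function `rank`
(lower rank = more preferred); if `S` has at most `k` elements this is all of `S`. -/
def topk {α : Type*} [DecidableEq α] (rank : α → ℕ) (k : ℕ) (S : Finset α) : Finset α :=
  S.filter fun a => (S.filter fun b => rank b < rank a).card < k

/-- An instance of the stable-matching problem with `n` women and `n` men.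
`mpref m w` is the rank man `m` assigns to woman `w` (lower = more preferred),
and `wpref w m` is the rank woman `w` assigns to man `m`. -/
structure Instance (n : ℕ) where
  mpref : Fin n → Fin n → ℕ
  wpref : Fin n → Fin n → ℕ
  mprefInj : ∀ m, Function.Injective (mpref m)
  wprefInj : ∀ w, Function.Injective (wpref w)

variable {n : ℕ}

/-- `prefers p a b` : `a` is strictly preferred to `b` under rank function `p`. -/
def prefers (p : Fin n → ℕ) (a b : Fin n) : Prop := p a < p b

/-- Given the current state `avail m` (the women who have not yet rejected man `m`),
the set of women man `m` proposes to tonight: his most-preferred available woman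
(a singleton, or empty if no woman is available). -/
def proposals (I : Instance n) (avail : Fin n → Finset (Fin n)) (m : Fin n) :
    Finset (Fin n) := topk (I.mpref m) 1 (avail m)

/-- The men proposing to woman `w` tonight. -/
def proposersOf (I : Instance n) (avail : Fin n → Finset (Fin n)) (w : Fin n) :
    Finset (Fin n) := Finset.univ.filter fun m => w ∈ proposals I avail m

/-- The men rejected by woman `w` tonight: all of tonight's proposers except
her most-preferred one. -/
def rejectedBy (I : Instance n) (avail : Fin n → Finset (Fin n)) (w : Fin n) :
    Finset (Fin n) := proposersOf I avail w \ topk (I.wpref w) 1 (proposersOf I avail w)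

/-- One night of the men-proposing Gale-Shapley algorithm. -/
def step (I : Instance n) (avail : Fin n → Finset (Fin n)) :
    Fin n → Finset (Fin n) :=
  fun m => (avail m).filter fun w => m ∉ rejectedBy I avail w

/-- `nights I t m` : the set of women who have not rejected man `m` before night `t`
(initially all women). -/
def nights (I : Instance n) (t : ℕ) : Fin n → Finset (Fin n) :=
  (step I)^[t] (fun _ => Finset.univ)

/-- The algorithm has terminated by night `T`: no man is rejected on night `T`. -/
def Stopped (I : Instance n) (T : ℕ) : Prop := step I (nights I T) = nights I T

/-- On night `T`, each man `m` serenades exactly under the window of `μ m`. -/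
def MatchesAt (I : Instance n) (T : ℕ) (μ : Fin n ≃ Fin n) : Prop :=
  ∀ m, proposals I (nights I T) m = {μ m}

/-- The bijection `μ` (from men to women) is the outcome of the men-proposing
Gale-Shapley algorithm on instance `I`: for some night `T` no rejection occurs and
every man `m` is matched with `μ m`. -/
def IsGSMatching (I : Instance n) (μ : Fin n ≃ Fin n) : Prop :=
  ∃ T, Stopped I T ∧ MatchesAt I T μ

/-- Stability of a matching `μ` (men to women): there is no unmatched pair `(w, m)`
each of whom strictly prefers the other to their partner under `μ`. -/
def Stable (I : Instance n) (μ : Fin n ≃ Fin n) : Prop :=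
  ¬ ∃ m w, μ m ≠ w ∧ I.mpref m w < I.mpref m (μ m) ∧ I.wpref w m < I.wpref w (μ.symm w)

/-- The instance in which the women in `L` replace their true preferences by the
false preference rankings `f`, everyone else being truthful. -/
def liarInstance (I : Instance n) (L : Finset (Fin n))
    (f : Fin n → Fin n → ℕ) (hf : ∀ w, Function.Injective (f w)) : Instance n where
  mpref := I.mpref
  wpref := fun w => if w ∈ L then f w else I.wpref w
  mprefInj := I.mprefInj
  wprefInj := fun w => by split_ifs; exacts [hf w, I.wprefInj w]

end GS

/-!
Only the relative order of a woman's reported ranks influences the algorithm, and sorting turns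
any injective report into one given by a permutation of the men. A unilateral lie therefore
amounts to one of the 24 permutations for each of the 4 women, and running the algorithm on these
96 instances shows that no woman ever receives a proposal from a man she truly prefers to her
truthful partner. The profitable joint lie and the blocking pair of its outcome are checked
directly.
-/

namespace GS

variable {n : ℕ}

instance (p : Fin n → ℕ) (a b : Fin n) : Decidable (prefers p a b) :=
  inferInstanceAs (Decidable (p a < p b))

instance (I : Instance n) (T : ℕ) : Decidable (Stopped I T) :=
  inferInstanceAs (Decidable (step I (nights I T) = nights I T))

instance (I : Instance n) (T : ℕ) (μ : Fin n ≃ Fin n) : Decidable (MatchesAt I T μ) :=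
  inferInstanceAs (Decidable (∀ m, proposals I (nights I T) m = {μ m}))

section Dynamics

variable (I : Instance n)

theorem nights_succ (t : ℕ) : nights I (t + 1) = step I (nights I t) :=
  Function.iterate_succ_apply' _ _ _

theorem nights_eq_of_stopped_of_le {T T' : ℕ} (hT : Stopped I T) (hle : T ≤ T') :
    nights I T' = nights I T := by
  obtain ⟨s, rfl⟩ := Nat.exists_eq_add_of_le hle
  induction s with
  | zero => rfl
  | succ s ih => rw [← add_assoc, nights_succ, ih (by omega), hT]

variable {I}

theorem Stopped.nights_eq {T T' : ℕ} (hT : Stopped I T) (hT' : Stopped I T') :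
    nights I T = nights I T' := by
  rcases le_total T T' with hle | hle
  · exact (nights_eq_of_stopped_of_le I hT hle).symm
  · exact nights_eq_of_stopped_of_le I hT' hle

theorem IsGSMatching.proposals_eq {μ : Fin n ≃ Fin n} (hμ : IsGSMatching I μ) {T : ℕ}
    (hT : Stopped I T) (m : Fin n) : proposals I (nights I T) m = {μ m} := by
  obtain ⟨T', hT', hμT'⟩ := hμ
  rw [hT.nights_eq hT']
  exact hμT' m

end Dynamics

section SamePrefs

def Instance.SamePrefs (I J : Instance n) : Prop :=
  I.mpref = J.mpref ∧ ∀ w a b, I.wpref w a < I.wpref w b ↔ J.wpref w a < J.wpref w b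

theorem topk_congr {α : Type*} [DecidableEq α] {r₁ r₂ : α → ℕ}
    (h : ∀ a b, r₁ a < r₁ b ↔ r₂ a < r₂ b) (k : ℕ) (S : Finset α) :
    topk r₁ k S = topk r₂ k S := by
  unfold topk
  refine Finset.filter_congr fun a _ => ?_
  rw [Finset.filter_congr fun b _ => h b a]

variable {I J : Instance n}

theorem Instance.SamePrefs.proposals_eq (h : I.SamePrefs J) (avail : Fin n → Finset (Fin n)) :
    proposals I avail = proposals J avail := by
  funext m
  simp only [proposals, h.1]

theorem Instance.SamePrefs.step_eq (h : I.SamePrefs J) : step I = step J := by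
  funext avail m
  have hproposers : proposersOf I avail = proposersOf J avail := by
    funext w
    simp only [proposersOf, h.proposals_eq]
  have hrejected : rejectedBy I avail = rejectedBy J avail := by
    funext w
    simp only [rejectedBy, hproposers, topk_congr (h.2 w)]
  simp only [step, hrejected]

theorem Instance.SamePrefs.nights_eq (h : I.SamePrefs J) (t : ℕ) : nights I t = nights J t := by
  simp only [nights, h.step_eq]

theorem Instance.SamePrefs.isGSMatching_iff (h : I.SamePrefs J) (μ : Fin n ≃ Fin n) :
    IsGSMatching I μ ↔ IsGSMatching J μ := by
  simp only [IsGSMatching, Stopped, MatchesAt, h.step_eq, h.nights_eq, h.proposals_eq]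

theorem liarInstance_samePrefs (I : Instance n) (L : Finset (Fin n))
    {f g : Fin n → Fin n → ℕ} (hf : ∀ w, Function.Injective (f w))
    (hg : ∀ w, Function.Injective (g w)) (hfg : ∀ w ∈ L, ∀ a b, f w a < f w b ↔ g w a < g w b) :
    (liarInstance I L f hf).SamePrefs (liarInstance I L g hg) := by
  refine ⟨rfl, fun w a b => ?_⟩
  by_cases hw : w ∈ L
  · simpa only [liarInstance, if_pos hw] using hfg w hw a b
  · simp only [liarInstance, if_neg hw]

end SamePrefs

theorem exists_perm_lt_iff_lt {f : Fin n → ℕ} (hf : Function.Injective f) :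
    ∃ p : Equiv.Perm (Fin n), ∀ a b, f a < f b ↔ p a < p b := by
  have hsorted : StrictMono (f ∘ Tuple.sort f) :=
    (Tuple.monotone_sort f).strictMono_of_injective (hf.comp (Tuple.sort f).injective)
  refine ⟨(Tuple.sort f).symm, fun a b => ?_⟩
  simpa only [Function.comp_apply, Equiv.apply_symm_apply] using
    hsorted.lt_iff_lt (a := (Tuple.sort f).symm a) (b := (Tuple.sort f).symm b)

section Example

/- Woman/man `i` is the paper's `w_{i+1}`/`m_{i+1}`; row `i` lists the ranks `i` assigns
(lower is better), and the unspecified tails of the paper's lists are filled in arbitrarily. -/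

def exampleInstance : Instance 4 where
  mpref := ![![0, 2, 1, 3], ![2, 0, 1, 3], ![2, 1, 0, 3], ![0, 2, 3, 1]]
  wpref := ![![1, 2, 0, 3], ![1, 2, 0, 3], ![1, 0, 2, 3], ![0, 1, 2, 3]]
  mprefInj := by decide
  wprefInj := by decide

theorem isGSMatching_exampleInstance : IsGSMatching exampleInstance (Equiv.refl _) :=
  ⟨1, by decide +kernel, by decide +kernel⟩

def permLiar (w : Fin 4) (p : Equiv.Perm (Fin 4)) : Instance 4 :=
  liarInstance exampleInstance {w} (fun _ m => p m) fun _ => Fin.val_injective.comp p.injective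

theorem permLiar_stopped_and_no_better_proposal (w : Fin 4) (p : Equiv.Perm (Fin 4)) :
    Stopped (permLiar w p) 5 ∧ ∀ m, w ∈ proposals (permLiar w p) (nights (permLiar w p) 5) m →
      ¬ prefers (exampleInstance.wpref w) m w := by
  revert w p
  decide +kernel

theorem no_profitable_single_lie (w : Fin 4) (f : Fin 4 → Fin 4 → ℕ)
    (hf : ∀ v, Function.Injective (f v)) (N : Fin 4 ≃ Fin 4)
    (hN : IsGSMatching (liarInstance exampleInstance {w} f hf) N) :
    ¬ prefers (exampleInstance.wpref w) (N.symm w) w := by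
  obtain ⟨p, hp⟩ := exists_perm_lt_iff_lt (hf w)
  have hsame : (liarInstance exampleInstance {w} f hf).SamePrefs (permLiar w p) :=
    liarInstance_samePrefs _ _ _ _ fun v hv => by rw [Finset.mem_singleton.1 hv]; exact hp
  obtain ⟨hstopped, hno_better⟩ := permLiar_stopped_and_no_better_proposal w p
  have hproposes := ((hsame.isGSMatching_iff N).1 hN).proposals_eq hstopped (N.symm w)
  exact hno_better _ (by simp [hproposes])

def jointLie : Fin 4 → Fin 4 → ℕ :=
  ![![2, 3, 0, 1], ![0, 2, 1, 3], ![0, 1, 2, 3], ![0, 1, 2, 3]]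

theorem jointLie_injective : ∀ w, Function.Injective (jointLie w) := by decide

def jointLieMatching : Fin 4 ≃ Fin 4 :=
  ⟨![1, 2, 0, 3], ![2, 0, 1, 3], by decide, by decide⟩

theorem isGSMatching_jointLie :
    IsGSMatching (liarInstance exampleInstance {0, 1} jointLie jointLie_injective)
      jointLieMatching :=
  ⟨6, by decide +kernel, by decide +kernel⟩

end Example

end GS

open GS in
/-- There is a 4-women/4-men instance in which (1) no single woman can obtain a
strictly better partner by unilaterally misreporting, (2) two women can jointly
misreport so that both are strictly better-off, and (3) the resulting matching is
not stable under the true preferences. -/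
theorem exists_profitable_joint_lie :
    ∃ (I : GS.Instance 4) (O : Fin 4 ≃ Fin 4), IsGSMatching I O ∧
      (∀ (w : Fin 4) (f : Fin 4 → Fin 4 → ℕ) (hf : ∀ v, Function.Injective (f v))
        (N : Fin 4 ≃ Fin 4), IsGSMatching (liarInstance I {w} f hf) N →
          ¬ prefers (I.wpref w) (N.symm w) (O.symm w)) ∧
      (∃ (w₁ w₂ : Fin 4), w₁ ≠ w₂ ∧
        ∃ (f : Fin 4 → Fin 4 → ℕ) (hf : ∀ v, Function.Injective (f v))
          (N : Fin 4 ≃ Fin 4),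
          IsGSMatching (liarInstance I {w₁, w₂} f hf) N ∧
          prefers (I.wpref w₁) (N.symm w₁) (O.symm w₁) ∧
          prefers (I.wpref w₂) (N.symm w₂) (O.symm w₂) ∧
          ¬ Stable I N) :=
  ⟨exampleInstance, Equiv.refl _, isGSMatching_exampleInstance, no_profitable_single_lie,
    0, 1, by decide, jointLie, jointLie_injective, jointLieMatching, isGSMatching_jointLie,
    by decide, by decide,
    -- `m₃` and `w₂` block.
    fun hstable => hstable ⟨2, 1, by decide, by decide, by decide⟩⟩
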